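/- Let f : ∂D → ℝ be 1-Lipschitz (take Λ₀ = ∂D), let x₀ ∈ D and let θ₀ ∈ ℝ satisfy θ₀ < f(y) + d(x₀,y) for every y ∈ ∂D (i.e. θ₀ < f₊(x₀), so (x₀,θ₀) lies in the invisible domain). Then there exists ε > 0 such that every x ∈ D̄ with f₋(x) < θ₀ − d(x,x₀) satisfies ⟨x,e⟩ ≥ ε. (Intermediate claim in the proof that the invisible domain E(∂S) has regular cosmological time: the spherical projection of the past of any point of E(∂S) is contained in a compact subset of the open hemisphere.) -/

import Mathlib

open scoped RealInnerProductSpace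
open Real

/-- The closed hemisphere `D̄ = {x ∈ S² : ⟪x,e⟫ ≥ 0}`. -/
def closedHemi (e : EuclideanSpace ℝ (Fin 3)) : Set (EuclideanSpace ℝ (Fin 3)) :=
  {x | ‖x‖ = 1 ∧ 0 ≤ ⟪x, e⟫}

/-- The open hemisphere `D = {x ∈ S² : ⟪x,e⟫ > 0}`. -/
def openHemi (e : EuclideanSpace ℝ (Fin 3)) : Set (EuclideanSpace ℝ (Fin 3)) :=
  {x | ‖x‖ = 1 ∧ 0 < ⟪x, e⟫}

/-- The equatorial circle `∂D = {x ∈ S² : ⟪x,e⟫ = 0}`. -/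
def equator (e : EuclideanSpace ℝ (Fin 3)) : Set (EuclideanSpace ℝ (Fin 3)) :=
  {x | ‖x‖ = 1 ∧ ⟪x, e⟫ = 0}

/-- `f₋(x) = sup_{z ∈ Λ₀} (f z - d(x,z))`. -/
noncomputable def lowerEnv (Λ₀ : Set (EuclideanSpace ℝ (Fin 3)))
    (f : EuclideanSpace ℝ (Fin 3) → ℝ) (x : EuclideanSpace ℝ (Fin 3)) : ℝ :=
  sSup ((fun z => f z - Real.arccos ⟪x, z⟫) '' Λ₀)

/-!
The function `y ↦ f y + d(x₀, y) - θ₀` is continuous and positive on the compact equator, so it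
is bounded below by some `δ > 0`. If `x` lies in the past of `(x₀, θ₀)` and `z` is any point of
the equator, then `f z - d(x, z) ≤ f₋(x) < θ₀ - d(x, x₀)`, and the triangle inequality through `x`
gives `δ < 2 d(x, z)`. Taking for `z` the point of the equator nearest to `x`, at distance
`arcsin ⟪x, e⟫`, yields `⟪x, e⟫ ≥ sin (min (δ/2) (π/2))`.
-/

section UnitVectors

variable {E : Type*} [NormedAddCommGroup E] [InnerProductSpace ℝ E]

lemma arccos_inner_le_arccos_inner_add {x y z : E} (hx : ‖x‖ = 1) (hy : ‖y‖ = 1)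
    (hz : ‖z‖ = 1) : arccos ⟪x, z⟫ ≤ arccos ⟪x, y⟫ + arccos ⟪y, z⟫ := by
  simpa [InnerProductGeometry.angle, hx, hy, hz] using
    InnerProductGeometry.angle_le_angle_add_angle x y z

lemma continuousOn_of_abs_sub_le_arccos_inner {S : Set E} (hS : ∀ y ∈ S, ‖y‖ = 1) {f : E → ℝ}
    (hf : ∀ x ∈ S, ∀ y ∈ S, |f x - f y| ≤ arccos ⟪x, y⟫) : ContinuousOn f S := by
  intro y hy
  have hdist : Filter.Tendsto (fun w => arccos ⟪w, y⟫) (nhdsWithin y S) (nhds 0) := by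
    have hcont : Continuous fun w : E => arccos ⟪w, y⟫ :=
      continuous_arccos.comp (continuous_id.inner continuous_const)
    simpa [real_inner_self_eq_norm_sq, hS y hy] using
      (hcont.tendsto y).mono_left (nhdsWithin_le_nhds (s := S))
  refine tendsto_iff_dist_tendsto_zero.2 <|
    squeeze_zero' (Filter.Eventually.of_forall fun _ => dist_nonneg) ?_ hdist
  filter_upwards [self_mem_nhdsWithin] with w hw
  exact hf w hw y hy

/-- The nearest point to `x` on the great circle orthogonal to `e` is the normalised
projection of `x` onto `e⟂`. -/
lemma exists_inner_eq_zero_inner_eq_sqrt {e x : E} (he : ‖e‖ = 1) (hx : ‖x‖ = 1)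
    (hxe : |⟪x, e⟫| < 1) :
    ∃ z : E, ‖z‖ = 1 ∧ ⟪z, e⟫ = 0 ∧ ⟪x, z⟫ = √(1 - ⟪x, e⟫ ^ 2) := by
  set t := ⟪x, e⟫
  set w := x - t • e with hw
  have hxx : ⟪x, x⟫ = 1 := by rw [real_inner_self_eq_norm_sq, hx, one_pow]
  have hee : ⟪e, e⟫ = 1 := by rw [real_inner_self_eq_norm_sq, he, one_pow]
  have hwe : ⟪w, e⟫ = 0 := by
    rw [hw, inner_sub_left, real_inner_smul_left, hee, mul_one, sub_self]
  have hxw : ⟪x, w⟫ = 1 - t ^ 2 := by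
    rw [hw, inner_sub_right, real_inner_smul_right, hxx]; ring
  have hww : ‖w‖ = √(1 - t ^ 2) := by
    rw [← hxw, norm_eq_sqrt_real_inner]
    congr 1
    nth_rewrite 1 [hw]
    rw [inner_sub_left, real_inner_smul_left, real_inner_comm w e, hwe, mul_zero, sub_zero]
  have hw0 : w ≠ 0 := by
    rw [← norm_ne_zero_iff, hww, sqrt_ne_zero']
    nlinarith [abs_lt.1 hxe]
  refine ⟨‖w‖⁻¹ • w, norm_smul_inv_norm hw0, ?_, ?_⟩
  · rw [real_inner_smul_left, hwe, mul_zero]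
  · rw [real_inner_smul_right, hxw, hww, inv_mul_eq_div, div_sqrt]

end UnitVectors

lemma isCompact_equator (e : EuclideanSpace ℝ (Fin 3)) : IsCompact (equator e) := by
  have : equator e = Metric.sphere 0 1 ∩ {x | ⟪x, e⟫ = 0} := by
    ext x; simp [equator]
  rw [this]
  exact (isCompact_sphere 0 1).inter_right
    (isClosed_eq (continuous_id.inner continuous_const) continuous_const)

section LowerEnvelope

variable {Λ : Set (EuclideanSpace ℝ (Fin 3))} {f : EuclideanSpace ℝ (Fin 3) → ℝ}

lemma sub_arccos_inner_le_lowerEnv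
    (hf : ∀ x ∈ Λ, ∀ y ∈ Λ, |f x - f y| ≤ arccos ⟪x, y⟫) {z : EuclideanSpace ℝ (Fin 3)}
    (hz : z ∈ Λ) (x : EuclideanSpace ℝ (Fin 3)) : f z - arccos ⟪x, z⟫ ≤ lowerEnv Λ f x := by
  refine le_csSup ⟨f z + π, ?_⟩ (Set.mem_image_of_mem _ hz)
  rintro - ⟨u, hu, rfl⟩
  linarith [(abs_le.1 (hf u hu z hz)).2, arccos_le_pi ⟪u, z⟫, arccos_nonneg ⟪x, u⟫]

lemma sub_lt_two_mul_arccos_inner_of_lowerEnv_lt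
    (hf : ∀ x ∈ Λ, ∀ y ∈ Λ, |f x - f y| ≤ arccos ⟪x, y⟫) {x x₀ z : EuclideanSpace ℝ (Fin 3)}
    (hx : ‖x‖ = 1) (hx₀ : ‖x₀‖ = 1) (hz : z ∈ Λ) (hz1 : ‖z‖ = 1) {θ₀ : ℝ}
    (hpast : lowerEnv Λ f x < θ₀ - arccos ⟪x, x₀⟫) :
    f z + arccos ⟪x₀, z⟫ - θ₀ < 2 * arccos ⟪x, z⟫ := by
  have htri := arccos_inner_le_arccos_inner_add hx₀ hx hz1
  rw [real_inner_comm x x₀] at htri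
  linarith [sub_arccos_inner_le_lowerEnv hf hz x]

end LowerEnvelope

/-- If `(x₀, θ₀)` lies in the invisible domain (i.e.
`θ₀ < f y + d(x₀,y)` for all `y ∈ ∂D`), then the spherical projection of its past
`{x : f₋(x) < θ₀ - d(x,x₀)}` stays at distance `≥ ε` from the equator, i.e. is
contained in a compact subset of the open hemisphere. -/
theorem past_of_point_in_compact_of_open_hemisphere
    (e : EuclideanSpace ℝ (Fin 3)) (he : ‖e‖ = 1)
    (f : EuclideanSpace ℝ (Fin 3) → ℝ)
    (hLip : ∀ x ∈ equator e, ∀ y ∈ equator e, |f x - f y| ≤ Real.arccos ⟪x, y⟫)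
    (x₀ : EuclideanSpace ℝ (Fin 3)) (hx₀ : x₀ ∈ openHemi e) (θ₀ : ℝ)
    (hθ₀ : ∀ y ∈ equator e, θ₀ < f y + Real.arccos ⟪x₀, y⟫) :
    ∃ ε > 0, ∀ x ∈ closedHemi e,
      lowerEnv (equator e) f x < θ₀ - Real.arccos ⟪x, x₀⟫ → ε ≤ ⟪x, e⟫ := by
  have hcont : ContinuousOn (fun y => f y + arccos ⟪x₀, y⟫) (equator e) :=
    (continuousOn_of_abs_sub_le_arccos_inner (fun _ hy => hy.1) hLip).add
      (continuous_arccos.comp (continuous_const.inner continuous_id)).continuousOn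
  obtain ⟨a, hθa, ha⟩ := (isCompact_equator e).exists_forall_le' hcont hθ₀
  set m := min ((a - θ₀) / 2) (π / 2)
  have hm_pos : 0 < m := lt_min (by linarith) (by positivity)
  have hm : m ∈ Set.Icc (-(π / 2)) (π / 2) := ⟨by linarith [pi_pos], min_le_right _ _⟩
  refine ⟨sin m, sin_pos_of_pos_of_lt_pi hm_pos (by linarith [pi_pos, hm.2]), ?_⟩
  rintro x ⟨hx, hxe⟩ hpast
  have hxe_le : ⟪x, e⟫ ≤ 1 := by simpa [hx, he] using real_inner_le_norm x e
  rcases hxe_le.eq_or_lt with hxe1 | hxe1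
  · exact hxe1 ▸ sin_le_one m
  obtain ⟨z, hz, hze, hxz⟩ :=
    exists_inner_eq_zero_inner_eq_sqrt he hx (abs_lt.2 ⟨by linarith, hxe1⟩)
  have hfar := sub_lt_two_mul_arccos_inner_of_lowerEnv_lt hLip hx hx₀.1 ⟨hz, hze⟩ hz hpast
  have hm_le : m ≤ arcsin ⟪x, e⟫ := by
    rw [arcsin_eq_arccos hxe, ← hxz]
    linarith [min_le_left ((a - θ₀) / 2) (π / 2), ha z ⟨hz, hze⟩]
  exact (le_arcsin_iff_sin_le hm ⟨by linarith, hxe_le⟩).1 hm_le
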